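/- Let M ∈ DA be a finite monoid, h : Γ* → M a surjective homomorphism, and let (s,e), (r,f) be linked pairs. If s = se and efe = e, fef = f hold (which follow from M ∈ DA when f ∈ M_e), then [sr][fef]^ω and [srfe][efe]^ω intersect nontrivially: the set [sr][fef]^ω ∩ [srfe][efe]^ω is nonempty. -/

import Mathlib

namespace InfWords

variable {Γ : Type}

/-- Finite and infinite words over `Γ`: `Γ^∞ = Γ* ∪ Γ^ω`. -/
abbrev Word (Γ : Type) := List Γ ⊕ (ℕ → Γ)

/-- Prepend a finite word to a finite or infinite word. -/
def wappend (u : List Γ) : Word Γ → Word Γ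
  | Sum.inl v => Sum.inl (u ++ v)
  | Sum.inr f => Sum.inr fun n => if h : n < u.length then u.get ⟨n, h⟩ else f (n - u.length)

/-- The set of finite words `Γ*` inside `Γ^∞`. -/
def finWords (Γ : Type) : Set (Word Γ) := Set.range Sum.inl

/-- The set of infinite words `Γ^ω` inside `Γ^∞`. -/
def infWords (Γ : Type) : Set (Word Γ) := Set.range Sum.inr

/-- The alphabet of a word: the letters occurring in it. -/
def alph : Word Γ → Set Γ
  | Sum.inl u => {a | a ∈ u}
  | Sum.inr f => {a | ∃ n, f n = a}

/-- The imaginary part: letters occurring infinitely often. -/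
def im : Word Γ → Set Γ
  | Sum.inl _ => ∅
  | Sum.inr f => {a | ∀ n, ∃ m, n ≤ m ∧ f m = a}

/-- `A^∞`: words all of whose letters lie in `A`. -/
def infin (A : Set Γ) : Set (Word Γ) := {α | alph α ⊆ A}

/-- The basic set `u A^∞` of the alphabetic topology. -/
def cone (u : List Γ) (A : Set Γ) : Set (Word Γ) := wappend u '' infin A

/-- The alphabetic topology on `Γ^∞`, generated by the sets `u A^∞`. -/
instance alphTop : TopologicalSpace (Word Γ) :=
  TopologicalSpace.generateFrom {S | ∃ u A, S = cone u A}

/-- `cpx A`: words with `alph = im = A`. -/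
def cpx (A : Set Γ) : Set (Word Γ) := {β | alph β = A ∧ im β = A}

/-- The strict alphabetic topology, generated by the sets `u · cpx A`. -/
def strictTopo (Γ : Type) : TopologicalSpace (Word Γ) :=
  TopologicalSpace.generateFrom {S | ∃ u A, S = wappend u '' cpx A}

/-- `u` is a finite prefix of the word `α`. -/
def IsPre (u : List Γ) : Word Γ → Prop
  | Sum.inl v => u <+: v
  | Sum.inr f => ∀ i : Fin u.length, u.get i = f i.1

/-- The arrow language `→W`: every prefix extends to a prefix lying in `W`. -/
def arrow (W : Set (List Γ)) : Set (Word Γ) :=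
  {α | ∀ u, IsPre u α → ∃ v, IsPre (u ++ v) α ∧ u ++ v ∈ W}

/-- The right quotient `L / A^∞`. -/
def quotInf (L : Set (Word Γ)) (A : Set Γ) : Set (List Γ) :=
  {u | ∃ β ∈ infin A, wappend u β ∈ L}

/-- `A^im`: words whose set of letters occurring infinitely often is exactly `A`. -/
def imSet (A : Set Γ) : Set (Word Γ) := {α | im α = A}

/-- `z^ω`, with the convention `1^ω = 1`. -/
def omegaPow : List Γ → Word Γ
  | [] => Sum.inl []
  | a :: l => Sum.inr fun n => (a :: l).get ⟨n % (a :: l).length, Nat.mod_lt n (Nat.succ_pos _)⟩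

/-- The partial products `u v₀ v₁ ⋯ v_{n-1}`. -/
def partialProd (u : List Γ) (v : ℕ → List Γ) (n : ℕ) : List Γ :=
  u ++ ((List.range n).map v).flatten

/-- `α` is the (finite or infinite) product `u v₀ v₁ v₂ ⋯`, with convention `1^ω = 1`. -/
def IsInfProd (u : List Γ) (v : ℕ → List Γ) : Word Γ → Prop
  | Sum.inl w => (∀ n, partialProd u v n <+: w) ∧ ∃ n, partialProd u v n = w
  | Sum.inr f => (∀ n, IsPre (partialProd u v n) (Sum.inr f)) ∧
      ∀ k, ∃ n, k < (partialProd u v n).length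

/-- `h : Γ* → M` is a monoid homomorphism. -/
structure IsHom {M : Type} [Monoid M] (h : List Γ → M) : Prop where
  map_one : h [] = 1
  map_mul : ∀ u v, h (u ++ v) = h u * h v

/-- `[s][e]^ω`: products `u v₀ v₁ ⋯` with `h u = s` and `h vᵢ = e`. -/
def pairSet {M : Type} (h : List Γ → M) (s e : M) : Set (Word Γ) :=
  {α | ∃ u v, h u = s ∧ (∀ i, h (v i) = e) ∧ IsInfProd u v α}

/-- `(s, e)` is a linked pair. -/
def LinkedPair {M : Type} [Monoid M] (s e : M) : Prop := s * e = s ∧ e * e = e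

/-- `h` strongly recognizes `L`. -/
def StronglyRecognizes {M : Type} [Monoid M] (h : List Γ → M) (L : Set (Word Γ)) : Prop :=
  L = ⋃ (s : M) (e : M) (_ : LinkedPair s e ∧ (pairSet h s e ∩ L).Nonempty), pairSet h s e

/-- `L` is regular: strongly recognized by a surjective homomorphism onto a finite monoid. -/
def Regular (L : Set (Word Γ)) : Prop :=
  ∃ (M : Type) (i : Monoid M), Finite M ∧
    ∃ h : List Γ → M, @IsHom Γ M i h ∧ Function.Surjective h ∧ @StronglyRecognizes Γ M i h L

/-- `L` is deterministic. -/
def Deterministic (L : Set (Word Γ)) : Prop :=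
  Regular L ∧ ∃ W : Set (List Γ), L ∩ infWords Γ = arrow W ∩ infWords Γ

/-- The syntactic preorder `u ≤_L v`. -/
def synLe (L : Set (Word Γ)) (u v : List Γ) : Prop :=
  ∀ x y z : List Γ,
    (wappend (x ++ v ++ y) (omegaPow z) ∈ L → wappend (x ++ u ++ y) (omegaPow z) ∈ L) ∧
    (wappend x (omegaPow (v ++ y)) ∈ L → wappend x (omegaPow (u ++ y)) ∈ L)

/-- The syntactic congruence `u ≡_L v`. -/
def synEq (L : Set (Word Γ)) (u v : List Γ) : Prop := synLe L u v ∧ synLe L v u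

/-- `[s][e]^ω` for syntactic classes represented by words `s`, `e`. -/
def pairSetSyn (L : Set (Word Γ)) (s e : List Γ) : Set (Word Γ) :=
  {α | ∃ u v, synEq L u s ∧ (∀ i, synEq L (v i) e) ∧ IsInfProd u v α}

/-- `s` represents an element of `M_e` in the syntactic monoid of `L`:
`s` is a product of words each of which is a factor of (something equivalent to) `e`. -/
def InMe (L : Set (Word Γ)) (e s : List Γ) : Prop :=
  ∃ parts : List (List Γ), s = parts.flatten ∧ ∀ p ∈ parts, ∃ x y, synEq L (x ++ p ++ y) e

/-- Glue a factorization `u₁ a₁ u₂ a₂ ⋯ u_k a_k` into a single finite word. -/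
def glue : List (List Γ) → List (Set Γ × Γ) → List Γ
  | x :: xs, p :: l => x ++ p.2 :: glue xs l
  | _, _ => []

/-- `(us, β)` is a factorization of `α` as `u₁ a₁ ⋯ u_k a_k β` with `uᵢ ∈ Aᵢ*`, `β ∈ B^∞`. -/
def IsFactorization (l : List (Set Γ × Γ)) (B : Set Γ) (us : List (List Γ)) (β : Word Γ)
    (α : Word Γ) : Prop :=
  us.length = l.length ∧
  (∀ (i : ℕ) (h1 : i < us.length) (h2 : i < l.length),
    ∀ c ∈ us.get ⟨i, h1⟩, c ∈ (l.get ⟨i, h2⟩).1) ∧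
  β ∈ infin B ∧ α = wappend (glue us l) β

/-- The monomial `A₁* a₁ ⋯ A_k* a_k B^∞`. -/
def monomial (l : List (Set Γ × Γ)) (B : Set Γ) : Set (Word Γ) :=
  {α | ∃ us β, IsFactorization l B us β α}

/-- The monomial given by `(l, B)` is unambiguous. -/
def Unambiguous (l : List (Set Γ × Γ)) (B : Set Γ) : Prop :=
  ∀ α us β us' β', IsFactorization l B us β α → IsFactorization l B us' β' α →
    us = us' ∧ β = β'

/-- `L` is a polynomial: a finite union of monomials. -/
def IsPolynomial (L : Set (Word Γ)) : Prop :=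
  ∃ ms : List (List (Set Γ × Γ) × Set Γ), L = {α | ∃ m ∈ ms, α ∈ monomial m.1 m.2}

/-- The set of marker letters of a monomial. -/
def sndSet (l : List (Set Γ × Γ)) : Set Γ := {a | ∃ p ∈ l, p.2 = a}

/-- `M_e`: the submonoid generated by the factors of the idempotent `e`. -/
def Msub {M : Type} [Monoid M] (e : M) : Submonoid M :=
  Submonoid.closure {t | ∃ x y, x * t * y = e}

/-- The variety `DA`: `ese = e` for all idempotents `e` and all `s ∈ M_e`. -/
def IsDA (M : Type) [Monoid M] : Prop :=
  ∀ e : M, e * e = e → ∀ s ∈ Msub e, e * s * e = e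

end InfWords

/-! Choose words `p`, `y`, `z` with `h p = s r`, `h y = f` and `h z = e`. The single word
`p (y z z y)^ω = (p y z) (z y y z)^ω` lies in both sets: by idempotency of `e` and `f`,
`h (y z z y) = f e f` and `h (z y y z) = e f e`, while `h (p y z) = s r f e`. -/

namespace InfWords

variable {Γ : Type}

@[simp]
lemma partialProd_zero (u : List Γ) (v : ℕ → List Γ) : partialProd u v 0 = u := by
  simp [partialProd]

lemma partialProd_succ (u : List Γ) (v : ℕ → List Γ) (n : ℕ) :
    partialProd u v (n + 1) = partialProd u v n ++ v n := by
  simp [partialProd, List.range_succ]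

lemma partialProd_prefix_of_le (u : List Γ) (v : ℕ → List Γ) {a b : ℕ} (hab : a ≤ b) :
    partialProd u v a <+: partialProd u v b := by
  induction b, hab using Nat.le_induction with
  | base => exact List.prefix_refl _
  | succ b _ ih => exact ih.trans (partialProd_succ u v b ▸ List.prefix_append _ _)

lemma length_partialProd_const (u C : List Γ) (n : ℕ) :
    (partialProd u (fun _ => C) n).length = u.length + n * C.length := by
  induction n with
  | zero => simp
  | succ n ih => rw [partialProd_succ, List.length_append, ih]; ring

lemma partialProd_append_rotate (u x y : List Γ) (n : ℕ) :
    partialProd (u ++ x) (fun _ => y ++ x) n = partialProd u (fun _ => x ++ y) n ++ x := by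
  induction n with
  | zero => simp
  | succ n ih => simp only [partialProd_succ, ih, List.append_assoc]

lemma IsPre.of_prefix {w w' : List Γ} {α : Word Γ} (hw : w <+: w') (h : IsPre w' α) :
    IsPre w α := by
  cases α with
  | inl v => exact hw.trans h
  | inr g =>
    intro i
    simpa only [List.get_eq_getElem, ← hw.getElem i.2] using h ⟨i, i.2.trans_le hw.length_le⟩

lemma exists_isPre_of_prefix_chain (w : ℕ → List Γ) (hw : ∀ a b, a ≤ b → w a <+: w b)
    (hlen : ∀ n, n ≤ (w n).length) : ∃ g : ℕ → Γ, ∀ n, IsPre (w n) (Sum.inr g) := by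
  refine ⟨fun n => (w (n + 1))[n]'((Nat.lt_succ_self n).trans_le (hlen _)), fun m i => ?_⟩
  have hm := hw m (max m (i + 1)) (le_max_left _ _)
  have hi := hw (i + 1) (max m (i + 1)) (le_max_right _ _)
  simp only [List.get_eq_getElem, hm.getElem, hi.getElem]

lemma IsInfProd.of_cofinal {u u' : List Γ} {v v' : ℕ → List Γ} {α : Word Γ}
    (hα : IsInfProd u v α)
    (h₁ : ∀ n, ∃ m, partialProd u' v' n <+: partialProd u v m)
    (h₂ : ∀ m, ∃ n, partialProd u v m <+: partialProd u' v' n) :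
    IsInfProd u' v' α := by
  cases α with
  | inl w =>
    obtain ⟨hpre, m, rfl⟩ := hα
    have hpre' : ∀ n, partialProd u' v' n <+: partialProd u v m := fun n =>
      (h₁ n).elim fun j hj => hj.trans (hpre j)
    obtain ⟨n, hn⟩ := h₂ m
    exact ⟨hpre', n, (hpre' n).eq_of_length (le_antisymm (hpre' n).length_le hn.length_le)⟩
  | inr g =>
    obtain ⟨hpre, hlen⟩ := hα
    refine ⟨fun n => ?_, fun k => ?_⟩
    · obtain ⟨m, hm⟩ := h₁ n
      exact (hpre m).of_prefix hm
    · obtain ⟨m, hm⟩ := hlen k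
      obtain ⟨n, hn⟩ := h₂ m
      exact ⟨n, hm.trans_le hn.length_le⟩

lemma IsInfProd.append_rotate {u x y : List Γ} {α : Word Γ}
    (hα : IsInfProd u (fun _ => x ++ y) α) : IsInfProd (u ++ x) (fun _ => y ++ x) α := by
  refine hα.of_cofinal (fun n => ⟨n + 1, ?_⟩) (fun m => ⟨m, ?_⟩)
  · rw [partialProd_append_rotate, partialProd_succ]
    exact (List.prefix_append_right_inj _).mpr (List.prefix_append _ _)
  · rw [partialProd_append_rotate]
    exact List.prefix_append _ _

lemma exists_isInfProd_const (u C : List Γ) : ∃ α, IsInfProd u (fun _ => C) α := by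
  by_cases hC : C = []
  · subst hC
    have hconst : ∀ n, partialProd u (fun _ => ([] : List Γ)) n = u := fun n => by
      simp [partialProd]
    exact ⟨Sum.inl u, fun n => (hconst n).symm ▸ List.prefix_refl u, 0, hconst 0⟩
  · have hlen : ∀ n, n ≤ (partialProd u (fun _ => C) n).length := fun n => by
      rw [length_partialProd_const]
      nlinarith [List.length_pos_iff.mpr hC]
    obtain ⟨g, hg⟩ := exists_isPre_of_prefix_chain _
      (fun _ _ => partialProd_prefix_of_le u _) hlen
    exact ⟨Sum.inr g, hg, fun k => ⟨k + 1, (Nat.lt_succ_self k).trans_le (hlen _)⟩⟩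

end InfWords

theorem da_pairSets_intersect_general (Γ : Type) (M : Type)
    [Monoid M]
    (h : List Γ → M) (hhom : InfWords.IsHom h) (hsurj : Function.Surjective h)
    (s e r f : M) (hse : InfWords.LinkedPair s e) (hrf : InfWords.LinkedPair r f) :
    (InfWords.pairSet h (s * r) (f * e * f) ∩
      InfWords.pairSet h (s * r * f * e) (e * f * e)).Nonempty := by
  obtain ⟨p, hp⟩ := hsurj (s * r)
  obtain ⟨y, hy⟩ := hsurj f
  obtain ⟨z, hz⟩ := hsurj e
  obtain ⟨α, hα⟩ := InfWords.exists_isInfProd_const p ((y ++ z) ++ (z ++ y))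
  refine ⟨α, ⟨p, _, hp, fun _ => ?_, hα⟩, ⟨p ++ (y ++ z), _, ?_, fun _ => ?_, hα.append_rotate⟩⟩
  · simp only [hhom.map_mul, hy, hz, ← mul_assoc]
    rw [mul_assoc f e e, hse.2]
  · simp only [hhom.map_mul, hp, hy, hz, ← mul_assoc]
  · simp only [hhom.map_mul, hy, hz, ← mul_assoc]
    rw [mul_assoc e f f, hrf.2]

theorem da_pairSets_intersect (Γ : Type) [Fintype Γ] (M : Type)
    [Monoid M] [Finite M] (hDA : InfWords.IsDA M)
    (h : List Γ → M) (hhom : InfWords.IsHom h) (hsurj : Function.Surjective h)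
    (s e r f : M) (hse : InfWords.LinkedPair s e) (hrf : InfWords.LinkedPair r f)
    (hs : s = s * e) (hefe : e * f * e = e) (hfef : f * e * f = f) :
    (InfWords.pairSet h (s * r) (f * e * f) ∩
      InfWords.pairSet h (s * r * f * e) (e * f * e)).Nonempty :=
  da_pairSets_intersect_general Γ M h hhom hsurj s e r f hse hrf
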